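/- arXiv:2207.11917 — 3 statements merged into one kernel-verified Lean document; each statement's English description precedes it below -/
import Mathlib

section
/- Let A be an m × n matrix over GF(2) and r ≥ 1. Let X be the set (multiset) of columns of A and let k = 2^r. Construct relation R over {0,1}^k whose tuples are, for each x in {0,1}^r, the tuple (y_0,...,y_{k-1}) with y_i = sum_{j in S_i} x_j mod 2, where S_0,...,S_{k-1} enumerate all subsets of {1,...,r}. Then the minimum over matrices B of GF(2)-rank ≤ r of ||A − B||_0 equals the minimum over center sets C = {c_0,...,c_{k-1}} ⊆ {0,1}^m satisfying R (in every coordinate) of sum over columns a of A of min_{c in C} d_H(a, c). -/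
/-- Number of nonzero entries of a matrix over GF(2). -/
def zeroNorm {m n : ℕ} (M : Matrix (Fin m) (Fin n) (ZMod 2)) : ℕ :=
  (Finset.univ.filter fun p : Fin m × Fin n => M p.1 p.2 ≠ 0).card

lemma zeroNorm_eq_sum {m n : ℕ} (A B : Matrix (Fin m) (Fin n) (ZMod 2)) :
    zeroNorm (A - B) = ∑ l : Fin n, hammingDist (fun i => A i l) (fun i => B i l) := by
  classical
  unfold zeroNorm hammingDist
  rw [Finset.card_filter, Fintype.sum_prod_type, Finset.sum_comm]
  refine Finset.sum_congr rfl fun l _ => ?_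
  rw [Finset.card_filter]
  refine Finset.sum_congr rfl fun i _ => ?_
  simp [Matrix.sub_apply, sub_ne_zero]

lemma zmod2_eq : ∀ a : ZMod 2, a = 0 ∨ a = 1 := by decide

theorem stmt7 (m n r : ℕ) (hr : 1 ≤ r) (A : Matrix (Fin m) (Fin n) (ZMod 2)) :
    sInf {t : ℕ | ∃ B : Matrix (Fin m) (Fin n) (ZMod 2), B.rank ≤ r ∧ t = zeroNorm (A - B)} =
    sInf {t : ℕ | ∃ C : Finset (Fin r) → Fin m → ZMod 2,
      (∀ i, ∃ x : Fin r → ZMod 2, ∀ S : Finset (Fin r), C S i = ∑ j ∈ S, x j) ∧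
      t = ∑ l : Fin n, ⨅ S : Finset (Fin r), hammingDist (fun i => A i l) (C S)} := by
  classical
  set LHS := {t : ℕ | ∃ B : Matrix (Fin m) (Fin n) (ZMod 2), B.rank ≤ r ∧ t = zeroNorm (A - B)}
  set RHS := {t : ℕ | ∃ C : Finset (Fin r) → Fin m → ZMod 2,
      (∀ i, ∃ x : Fin r → ZMod 2, ∀ S : Finset (Fin r), C S i = ∑ j ∈ S, x j) ∧
      t = ∑ l : Fin n, ⨅ S : Finset (Fin r), hammingDist (fun i => A i l) (C S)}
  have hL : LHS.Nonempty :=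
    ⟨zeroNorm (A - 0), 0, by simp [Matrix.rank_zero], rfl⟩
  have hR : RHS.Nonempty :=
    ⟨_, fun _ _ => 0, fun i => ⟨fun _ => 0, fun S => by simp⟩, rfl⟩
  apply le_antisymm
  · -- sInf LHS ≤ sInf RHS
    obtain ⟨C, hC, ht⟩ := Nat.sInf_mem hR
    -- choose a minimizing center per column
    have hmin : ∀ l : Fin n, ∃ S : Finset (Fin r),
        hammingDist (fun i => A i l) (C S) =
          ⨅ S : Finset (Fin r), hammingDist (fun i => A i l) (C S) := by
      intro l
      exact Nat.sInf_mem (Set.range_nonempty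
        (fun S : Finset (Fin r) => hammingDist (fun i => A i l) (C S)))
    choose S hS using hmin
    -- the per-row coefficient matrix
    choose x hx using hC
    set U : Matrix (Fin m) (Fin r) (ZMod 2) := fun i j => x i j with hU
    set B : Matrix (Fin m) (Fin n) (ZMod 2) := fun i l => C (S l) i with hB
    have hrank : B.rank ≤ r := by
      have hfac : B = U * (Matrix.of fun j l => if j ∈ S l then (1 : ZMod 2) else 0) := by
        ext i l
        show C (S l) i = _
        rw [hx i (S l)]
        simp only [Matrix.mul_apply, Matrix.of_apply, mul_ite, mul_one, mul_zero]
        rw [Finset.sum_ite_mem, Finset.univ_inter]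
      calc B.rank ≤ U.rank := by rw [hfac]; exact Matrix.rank_mul_le_left _ _
        _ ≤ Fintype.card (Fin r) := Matrix.rank_le_card_width U
        _ = r := Fintype.card_fin r
    refine Nat.sInf_le ⟨B, hrank, ?_⟩
    rw [zeroNorm_eq_sum, ht]
    refine Finset.sum_congr rfl fun l _ => ?_
    rw [← hS l]
  · -- sInf RHS ≤ sInf LHS
    obtain ⟨B, hrank, ht⟩ := Nat.sInf_mem hL
    -- column space of B has finrank ≤ r
    set W : Submodule (ZMod 2) (Fin m → ZMod 2) :=
      Submodule.span (ZMod 2) (Set.range B.transpose) with hW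
    have hd : Module.finrank (ZMod 2) W ≤ r := by
      rw [hW]; exact (Matrix.rank_eq_finrank_span_cols B).symm.le.trans hrank
    have : FiniteDimensional (ZMod 2) W := inferInstance
    set d := Module.finrank (ZMod 2) W with hdd
    set b : Module.Basis (Fin d) (ZMod 2) W := Module.finBasis (ZMod 2) W with hb
    set u : Fin r → (Fin m → ZMod 2) :=
      Function.extend (Fin.castLE hd) (fun k => (b k : Fin m → ZMod 2)) 0 with hu
    have hub : ∀ k : Fin d, u (Fin.castLE hd k) = (b k : Fin m → ZMod 2) := fun k =>
      Function.Injective.extend_apply (Fin.castLE_injective hd) _ _ _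
    have hWle : ∀ w : W, (w : Fin m → ZMod 2) ∈ Submodule.span (ZMod 2) (Set.range u) := by
      intro w
      have h1 : (w : Fin m → ZMod 2) ∈
          Submodule.map W.subtype (Submodule.span (ZMod 2) (Set.range b)) :=
        ⟨w, b.mem_span w, rfl⟩
      rw [Submodule.map_span] at h1
      refine Submodule.span_mono ?_ h1
      rintro _ ⟨_, ⟨k, rfl⟩, rfl⟩
      exact ⟨Fin.castLE hd k, hub k⟩
    -- write each column of B as a 0-1 combination of u
    have hcol : ∀ l : Fin n, ∃ c : Fin r → ZMod 2,
        ∑ j : Fin r, c j • u j = fun i => B i l := by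
      intro l
      have hmem : (fun i => B i l) ∈ W := Submodule.subset_span ⟨l, rfl⟩
      exact (Submodule.mem_span_range_iff_exists_fun (ZMod 2)).mp (hWle ⟨_, hmem⟩)
    choose c hc using hcol
    set C : Finset (Fin r) → Fin m → ZMod 2 := fun S i => ∑ j ∈ S, u j i with hCdef
    have hCprop : ∀ i, ∃ x : Fin r → ZMod 2, ∀ S : Finset (Fin r), C S i = ∑ j ∈ S, x j :=
      fun i => ⟨fun j => u j i, fun S => rfl⟩
    have hBC : ∀ l : Fin n, C (Finset.univ.filter fun j => c l j = 1) = fun i => B i l := by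
      intro l
      funext i
      have h1 := congrFun (hc l) i
      simp only [Finset.sum_apply, Pi.smul_apply] at h1
      rw [← h1]
      show ∑ j ∈ Finset.univ.filter (fun j => c l j = 1), u j i
          = ∑ j : Fin r, c l j • u j i
      rw [Finset.sum_filter]
      refine Finset.sum_congr rfl fun j _ => ?_
      rcases zmod2_eq (c l j) with h | h <;> simp [h]
    refine le_trans (Nat.sInf_le ⟨C, hCprop, rfl⟩) ?_
    rw [ht, zeroNorm_eq_sum]
    refine Finset.sum_le_sum fun l _ => ?_
    have : (⨅ S : Finset (Fin r), hammingDist (fun i => A i l) (C S)) ≤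
        hammingDist (fun i => A i l) (C (Finset.univ.filter fun j => c l j = 1)) :=
      Nat.sInf_le ⟨_, rfl⟩
    rwa [hBC l] at this
end

section
/- With the setup of the equivalence between GF(2) matrix factorization and binary constrained clustering: given a center set C = {c_0,...,c_{k-1}} satisfying R with clustering cost t, the matrix B whose i-th column is a closest vector in C to the i-th column of A satisfies GF(2)-rank(B) ≤ r and ||A − B||_0 ≤ t. -/
namespace Matrix

variable {R m n ι : Type*} [Fintype ι] [DecidableEq ι]

def subsetIndicator [Zero R] [One R] (T : n → Finset ι) : Matrix ι n R :=
  fun j l => if j ∈ T l then 1 else 0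

theorem mul_subsetIndicator_apply [NonAssocSemiring R] (X : Matrix m ι R) (T : n → Finset ι)
    (i : m) (l : n) : (X * (subsetIndicator T : Matrix ι n R)) i l = ∑ j ∈ T l, X i j := by
  simp only [mul_apply, subsetIndicator, mul_ite, mul_one, mul_zero, Finset.sum_ite_mem,
    Finset.univ_inter]

theorem rank_le_card_of_eq_subset_sums [CommSemiring R] [StrongRankCondition R] [Fintype n]
    {B : Matrix m n R} (X : Matrix m ι R) (T : n → Finset ι)
    (hB : ∀ i l, B i l = ∑ j ∈ T l, X i j) : B.rank ≤ Fintype.card ι := by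
  have hBXY : B = X * (subsetIndicator T : Matrix ι n R) := by
    ext i l
    rw [hB, mul_subsetIndicator_apply]
  rw [hBXY]
  exact (rank_mul_le_left X _).trans X.rank_le_card_width

end Matrix

theorem zeroNorm_sub_eq_sum_hammingDist {m n : ℕ} (A B : Matrix (Fin m) (Fin n) (ZMod 2)) :
    zeroNorm (A - B) = ∑ l, hammingDist (fun i => A i l) (fun i => B i l) := by
  rw [zeroNorm, Finset.card_filter, ← Finset.univ_product_univ, Finset.sum_product_right]
  refine Finset.sum_congr rfl fun l _ => ?_
  rw [hammingDist, Finset.card_filter]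
  simp [sub_eq_zero]

theorem stmt8 (m n r : ℕ) (A B : Matrix (Fin m) (Fin n) (ZMod 2))
    (C : Finset (Fin r) → Fin m → ZMod 2)
    (hC : ∀ i, ∃ x : Fin r → ZMod 2, ∀ S : Finset (Fin r), C S i = ∑ j ∈ S, x j)
    (hB : ∀ l : Fin n, ∃ S : Finset (Fin r), (fun i => B i l) = C S ∧
      ∀ S' : Finset (Fin r),
        hammingDist (fun i => A i l) (C S) ≤ hammingDist (fun i => A i l) (C S')) :
    B.rank ≤ r ∧
      zeroNorm (A - B) ≤
        ∑ l : Fin n, ⨅ S : Finset (Fin r), hammingDist (fun i => A i l) (C S) := by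
  choose X hX using hC
  choose T hBT hTmin using hB
  constructor
  · have hB_sums : ∀ i l, B i l = ∑ j ∈ T l, X i j := fun i l => by
      rw [← hX i (T l), ← hBT l]
    simpa using Matrix.rank_le_card_of_eq_subset_sums (Matrix.of X) T hB_sums
  · rw [zeroNorm_sub_eq_sum_hammingDist]
    refine Finset.sum_le_sum fun l _ => ?_
    rw [hBT l]
    exact le_ciInf (hTmin l)
end

section
/- Let p be prime, q ≥ 1, A an m × n matrix with entries in {0,...,p−1}, X the multiset of its columns, k = p^r, and R the k-ary relation over {0,...,p−1} consisting of all tuples (y_a)_{a in GF(p)^r} — indexed by vectors a ∈ GF(p)^r — of the form y_a = sum_j a_j x_j mod p for some x ∈ GF(p)^r, used in every coordinate. Then the minimum, over matrices B over GF(p) with GF(p)-rank ≤ r, of ||A − B||_q^q equals the minimum, over center sets C = {c_a : a ∈ GF(p)^r} ⊆ {0,...,p−1}^m satisfying R, of sum over columns x of A of min_{c ∈ C} ||x − c||_q^q. -/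
open Module Submodule Matrix

lemma exists_factorization {K : Type*} [Field K] {m n r : ℕ}
    (B : Matrix (Fin m) (Fin n) K) (h : B.rank ≤ r) :
    ∃ (M : Matrix (Fin m) (Fin r) K) (N : Matrix (Fin r) (Fin n) K), B = M * N := by
  set V : Submodule K (Fin m → K) := Submodule.span K (Set.range Bᵀ) with hV
  have hd : finrank K V ≤ r := by
    exact (le_of_eq B.rank_eq_finrank_span_cols.symm).trans h
  set d := finrank K V with hdd
  let b : Basis (Fin d) K V := Module.finBasis K V
  let col : Fin n → V := fun l => ⟨Bᵀ l, Submodule.subset_span (Set.mem_range_self l)⟩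
  refine ⟨fun i j => if h : (j : ℕ) < d then (b ⟨j, h⟩ : Fin m → K) i else 0,
    fun j l => if h : (j : ℕ) < d then b.repr (col l) ⟨j, h⟩ else 0, ?_⟩
  ext i l
  change B i l = ∑ j : Fin r, (if h : (j : ℕ) < d then (b ⟨j, h⟩ : Fin m → K) i else 0) *
    (if h : (j : ℕ) < d then (b.repr (col l) ⟨j, h⟩ : K) else 0)
  set g : ℕ → K := fun j =>
    if h : j < d then b.repr (col l) ⟨j, h⟩ * ((b ⟨j, h⟩ : Fin m → K) i) else 0 with hg
  have key : ∀ j : Fin r,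
      (if h : (j : ℕ) < d then (b ⟨j, h⟩ : Fin m → K) i else 0) *
      (if h : (j : ℕ) < d then (b.repr (col l) ⟨j, h⟩ : K) else 0) = g (j : ℕ) := by
    intro j; rw [hg]; dsimp only; split <;> ring
  rw [Finset.sum_congr rfl fun j _ => key j]
  have h1 : ∑ j : Fin r, g (j : ℕ) = ∑ j ∈ Finset.range r, g j :=
    Fin.sum_univ_eq_sum_range g r
  have h2 : ∑ j ∈ Finset.range r, g j = ∑ j ∈ Finset.range d, g j := by
    refine (Finset.sum_subset (Finset.range_subset_range.2 hd) ?_).symm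
    intro j _ hj
    rw [Finset.mem_range, not_lt] at hj
    rw [hg]; exact dif_neg (not_lt.2 hj)
  have h3 : ∑ j ∈ Finset.range d, g j = ∑ j : Fin d, g (j : ℕ) :=
    (Fin.sum_univ_eq_sum_range g d).symm
  rw [h1, h2, h3]
  have hB : B i l = ((∑ j : Fin d, b.repr (col l) j • b j : V) : Fin m → K) i := by
    rw [Basis.sum_repr]; rfl
  rw [hB]
  rw [Submodule.coe_sum, Finset.sum_apply]
  refine Finset.sum_congr rfl fun j _ => ?_
  rw [hg]; dsimp only
  rw [dif_pos j.2]
  simp [smul_eq_mul]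

theorem stmt14 (p m n r : ℕ) [Fact (Nat.Prime p)] (q : ℝ) (hq : 1 ≤ q)
    (A : Matrix (Fin m) (Fin n) (ZMod p)) :
    sInf {t : ℝ | ∃ B : Matrix (Fin m) (Fin n) (ZMod p), B.rank ≤ r ∧
        t = ∑ i, ∑ j, (((A i j - B i j).val : ℝ)) ^ q} =
    sInf {t : ℝ | ∃ C : (Fin r → ZMod p) → Fin m → ZMod p,
        (∀ i, ∃ x : Fin r → ZMod p, ∀ a : Fin r → ZMod p, C a i = ∑ j, a j * x j) ∧
        t = ∑ l : Fin n, ⨅ a : Fin r → ZMod p, ∑ i, ((A i l - C a i).val : ℝ) ^ q} := by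
  set S1 : Set ℝ := {t : ℝ | ∃ B : Matrix (Fin m) (Fin n) (ZMod p), B.rank ≤ r ∧
        t = ∑ i, ∑ j, (((A i j - B i j).val : ℝ)) ^ q} with hS1
  set S2 : Set ℝ := {t : ℝ | ∃ C : (Fin r → ZMod p) → Fin m → ZMod p,
        (∀ i, ∃ x : Fin r → ZMod p, ∀ a : Fin r → ZMod p, C a i = ∑ j, a j * x j) ∧
        t = ∑ l : Fin n, ⨅ a : Fin r → ZMod p, ∑ i, ((A i l - C a i).val : ℝ) ^ q} with hS2
  have hterm : ∀ (x : ZMod p), (0:ℝ) ≤ ((x.val : ℝ)) ^ q :=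
    fun x => Real.rpow_nonneg (Nat.cast_nonneg _) q
  have bdd1 : BddBelow S1 := by
    refine ⟨0, fun t ht => ?_⟩
    obtain ⟨B, _, rfl⟩ := ht
    exact Finset.sum_nonneg fun i _ => Finset.sum_nonneg fun j _ => hterm _
  have bdd2 : BddBelow S2 := by
    refine ⟨0, fun t ht => ?_⟩
    obtain ⟨C, _, rfl⟩ := ht
    exact Finset.sum_nonneg fun l _ =>
      le_ciInf fun a => Finset.sum_nonneg fun i _ => hterm _
  have ne1 : S1.Nonempty := ⟨_, 0, by simp, rfl⟩
  have ne2 : S2.Nonempty :=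
    ⟨_, fun _ _ => 0, fun i => ⟨0, fun a => by simp⟩, rfl⟩
  have bddr : ∀ (f : (Fin r → ZMod p) → ℝ), BddBelow (Set.range f) :=
    fun f => (Set.finite_range f).bddBelow
  apply le_antisymm
  · -- sInf S1 ≤ sInf S2
    refine le_csInf ne2 fun t ht => ?_
    obtain ⟨C, hC, rfl⟩ := ht
    choose X hX using hC
    have hmin : ∀ l : Fin n, ∃ a : Fin r → ZMod p, ∀ a',
        ∑ i, ((A i l - C a i).val : ℝ) ^ q ≤ ∑ i, ((A i l - C a' i).val : ℝ) ^ q :=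
      fun l => Finite.exists_min _
    choose amin hamin using hmin
    set B : Matrix (Fin m) (Fin n) (ZMod p) := fun i l => C (amin l) i with hB
    have hrank : B.rank ≤ r := by
      have hfac : B = (Matrix.of fun i j => X i j) *
          (Matrix.of fun (j : Fin r) (l : Fin n) => amin l j) := by
        ext i l
        rw [Matrix.mul_apply, hB]
        dsimp only
        rw [hX i (amin l)]
        exact Finset.sum_congr rfl fun j _ => mul_comm _ _
      rw [hfac]
      exact (Matrix.rank_mul_le_right _ _).trans (Matrix.rank_le_height _)
    refine csInf_le bdd1 ⟨B, hrank, ?_⟩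
    rw [Finset.sum_comm]
    refine Finset.sum_congr rfl fun l _ => ?_
    exact le_antisymm (ciInf_le (bddr _) (amin l)) (le_ciInf fun a' => hamin l a')
  · -- sInf S2 ≤ sInf S1
    refine le_csInf ne1 fun t ht => ?_
    obtain ⟨B, hBr, rfl⟩ := ht
    obtain ⟨M, N, rfl⟩ := exists_factorization B hBr
    set C : (Fin r → ZMod p) → Fin m → ZMod p := fun a i => ∑ j, a j * M i j with hC
    refine (csInf_le bdd2 ⟨C, fun i => ⟨fun j => M i j, fun a => rfl⟩, rfl⟩).trans ?_
    rw [Finset.sum_comm]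
    refine Finset.sum_le_sum fun l _ => ?_
    refine (ciInf_le (bddr _) (fun j => N j l)).trans ?_
    refine le_of_eq (Finset.sum_congr rfl fun i _ => ?_)
    have hCe : C (fun j => N j l) i = (M * N) i l := by
      simp only [hC, Matrix.mul_apply]
      exact Finset.sum_congr rfl fun j _ => mul_comm _ _
    rw [hCe]
end
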